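/- arXiv:1510.06263 — 10 statements merged into one kernel-verified Lean document; each statement's English description precedes it below -/
import Mathlib

section
/- Let (θ_n, x_n) follow the noise-free 2D SLAM dynamics with fixed landmark p ∈ ℝ². For each n let F_n be the 5×5 block matrix [[1, 0₁ₓ₂, 0₁ₓ₂],[R(θ_{n−1}) J v_n, I₂, 0₂ₓ₂],[0₂ₓ₁, 0₂ₓ₂, I₂]] (the EKF state Jacobian linearized at the true state) and let H_n = M_n · [−J R(θ_n)ᵀ (p − x_n) | −R(θ_n)ᵀ | R(θ_n)ᵀ] ∈ ℝ^{2×5}, where M_n is an arbitrary 2×2 real matrix (the Jacobian of the output function h̃). Let δX₀ = (1, J x₀, J p) ∈ ℝ⁵. Then for every n ≥ 1, H_n · (F_n F_{n−1} ⋯ F₁ · δX₀) = 0; that is, the infinitesimal rotation of the global frame is an unobservable shift of the SLAM system linearized along the true trajectory. -/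
open Matrix Real

/-- The 2×2 rotation matrix of angle `θ`. -/
noncomputable def Rmat (θ : ℝ) : Matrix (Fin 2) (Fin 2) ℝ :=
  !![Real.cos θ, -Real.sin θ; Real.sin θ, Real.cos θ]

/-- The matrix `J = [[0,-1],[1,0]]`. -/
def Jmat : Matrix (Fin 2) (Fin 2) ℝ := !![0, -1; 1, 0]


/-- The vector `(a, x, p) ∈ ℝ⁵ = ℝ × ℝ² × ℝ²` in coordinates. -/
def vec5 (a : ℝ) (x p : Fin 2 → ℝ) : Fin 5 → ℝ := ![a, x 0, x 1, p 0, p 1]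

/-- The EKF state-propagation Jacobian
`F = [[1, 0, 0], [R(θ) J v, I₂, 0], [0, 0, I₂]]` of the 2D SLAM model with one landmark. -/
noncomputable def Fmat (θ : ℝ) (v : Fin 2 → ℝ) : Matrix (Fin 5) (Fin 5) ℝ :=
  !![1, 0, 0, 0, 0;
     ((Rmat θ).mulVec (Jmat.mulVec v)) 0, 1, 0, 0, 0;
     ((Rmat θ).mulVec (Jmat.mulVec v)) 1, 0, 1, 0, 0;
     0, 0, 0, 1, 0;
     0, 0, 0, 0, 1]

/-- The 2×5 block matrix `[−J R(θ)ᵀ (p − x) | −R(θ)ᵀ | R(θ)ᵀ]`. -/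
noncomputable def Hblock (θ : ℝ) (x p : Fin 2 → ℝ) : Matrix (Fin 2) (Fin 5) ℝ :=
  !![-(Jmat.mulVec ((Rmat θ)ᵀ.mulVec (p - x))) 0,
       -((Rmat θ)ᵀ 0 0), -((Rmat θ)ᵀ 0 1), (Rmat θ)ᵀ 0 0, (Rmat θ)ᵀ 0 1;
     -(Jmat.mulVec ((Rmat θ)ᵀ.mulVec (p - x))) 1,
       -((Rmat θ)ᵀ 1 0), -((Rmat θ)ᵀ 1 1), (Rmat θ)ᵀ 1 0, (Rmat θ)ᵀ 1 1]

/-- `prodF F n = F n * F (n-1) * ⋯ * F 1` (and `prodF F 0 = 1`). -/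
noncomputable def prodF (F : ℕ → Matrix (Fin 5) (Fin 5) ℝ) : ℕ → Matrix (Fin 5) (Fin 5) ℝ
  | 0 => 1
  | n + 1 => F (n + 1) * prodF F n

/-- Along the true trajectory of the noise-free 2D SLAM dynamics, the
infinitesimal rotation shift `δX₀ = (1, J x₀, J p)` is an unobservable shift of the linearized
system: `Hₙ (Fₙ ⋯ F₁ δX₀) = 0` for all `n ≥ 1`, where `Fₙ, Hₙ` are the EKF Jacobians
linearized at the true state and `Mₙ` (the Jacobian of `h̃`) is arbitrary. -/
theorem statement1 (ω : ℕ → ℝ) (v : ℕ → Fin 2 → ℝ) (θ : ℕ → ℝ) (x : ℕ → Fin 2 → ℝ)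
    (p : Fin 2 → ℝ) (M : ℕ → Matrix (Fin 2) (Fin 2) ℝ)
    (hθ : ∀ n, θ (n + 1) = θ n + ω (n + 1))
    (hx : ∀ n, x (n + 1) = x n + (Rmat (θ n)).mulVec (v (n + 1))) :
    ∀ n, 1 ≤ n →
      (M n * Hblock (θ n) (x n) p).mulVec
        ((prodF (fun k => Fmat (θ (k - 1)) (v k)) n).mulVec
          (vec5 1 (Jmat.mulVec (x 0)) (Jmat.mulVec p))) = 0 := by

  have key : ∀ n, (prodF (fun k => Fmat (θ (k - 1)) (v k)) n).mulVec
      (vec5 1 (Jmat.mulVec (x 0)) (Jmat.mulVec p))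
      = vec5 1 (Jmat.mulVec (x n)) (Jmat.mulVec p) := by
    intro n
    induction n with
    | zero => simp [prodF]
    | succ n ih =>
      rw [prodF, ← Matrix.mulVec_mulVec, ih]
      funext i
      fin_cases i <;>
        simp [Fmat, Rmat, Jmat, vec5, hx n, Matrix.mulVec, dotProduct,
          Fin.sum_univ_succ] <;> ring
  intro n _
  rw [key n, ← Matrix.mulVec_mulVec]
  have h0 : (Hblock (θ n) (x n) p).mulVec (vec5 1 (Jmat.mulVec (x n)) (Jmat.mulVec p)) = 0 := by
    funext i
    fin_cases i <;>
      · simp [Hblock, Rmat, Jmat, vec5, Matrix.mulVec, dotProduct,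
          Fin.sum_univ_succ, Matrix.transpose_apply]
        nlinarith [sin_sq_add_cos_sq (θ n)]
  rw [h0, Matrix.mulVec_zero]
end

section
/- Let (θ̂_n, x̂_n, p̂_n)_{n≥0} be arbitrary sequences in ℝ × ℝ² × ℝ² (arbitrary linearization points), and for each n define the EKF Jacobians F_n = [[1, 0₁ₓ₂, 0₁ₓ₂],[R(θ̂_{n−1}) J v_n, I₂, 0₂ₓ₂],[0₂ₓ₁, 0₂ₓ₂, I₂]] ∈ ℝ^{5×5} and H_n = M_n · [−J R(θ̂_n)ᵀ (p̂_n − x̂_n) | −R(θ̂_n)ᵀ | R(θ̂_n)ᵀ] ∈ ℝ^{2×5}, where each M_n is an arbitrary 2×2 real matrix and v_n ∈ ℝ² is arbitrary. Then for any u ∈ ℝ², the translation shift δX = (0, u, u) ∈ ℝ⁵ satisfies F_n δX = δX and H_n δX = 0 for every n; hence H_n · (F_n ⋯ F₁ δX) = 0 for all n: infinitesimal translations of the global frame are unobservable shifts of the standard EKF linearized model regardless of the linearization points. -/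
open Matrix Real

lemma Ffix (θ : ℝ) (v u : Fin 2 → ℝ) :
    (Fmat θ v).mulVec (vec5 0 u u) = vec5 0 u u := by
  funext i
  fin_cases i <;>
    simp [Fmat, vec5, mulVec, dotProduct, Fin.sum_univ_five]

lemma Hzero (θ : ℝ) (x p u : Fin 2 → ℝ) :
    (Hblock θ x p).mulVec (vec5 0 u u) = 0 := by
  funext i
  fin_cases i <;>
    simp [Hblock, vec5, mulVec, dotProduct, Fin.sum_univ_five]

/-- For arbitrary linearization points `(θ̂ₙ, x̂ₙ, p̂ₙ)`, arbitrary inputs `vₙ`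
and arbitrary output Jacobians `Mₙ`, the translation shift `δX = (0, u, u)` satisfies
`Fₙ δX = δX` and `Hₙ δX = 0`, hence `Hₙ (Fₙ ⋯ F₁ δX) = 0` for all `n`. -/
theorem statement2 (θh : ℕ → ℝ) (xh ph : ℕ → Fin 2 → ℝ) (v : ℕ → Fin 2 → ℝ)
    (M : ℕ → Matrix (Fin 2) (Fin 2) ℝ) (u : Fin 2 → ℝ) :
    (∀ n, (Fmat (θh (n - 1)) (v n)).mulVec (vec5 0 u u) = vec5 0 u u) ∧
    (∀ n, (M n * Hblock (θh n) (xh n) (ph n)).mulVec (vec5 0 u u) = 0) ∧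
    (∀ n, (M n * Hblock (θh n) (xh n) (ph n)).mulVec
        ((prodF (fun k => Fmat (θh (k - 1)) (v k)) n).mulVec (vec5 0 u u)) = 0) := by
  refine ⟨fun n => Ffix _ _ _, fun n => ?_, fun n => ?_⟩
  · rw [← Matrix.mulVec_mulVec, Hzero]; simp [Matrix.mulVec_zero]
  · have : (prodF (fun k => Fmat (θh (k - 1)) (v k)) n).mulVec (vec5 0 u u) = vec5 0 u u := by
      induction n with
      | zero => simp [prodF]
      | succ m ih => rw [prodF, ← Matrix.mulVec_mulVec, ih, Ffix]
    rw [this, ← Matrix.mulVec_mulVec, Hzero]; simp [Matrix.mulVec_zero]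
end

section
/- Let (θ̂_{n|n}, x̂_{n|n}, p̂_{n|n})_{n≥0} and (θ̂_{n|n−1}, x̂_{n|n−1}, p̂_{n|n−1})_{n≥1} be sequences in ℝ × ℝ² × ℝ² satisfying the EKF prediction relations θ̂_{n|n−1} = θ̂_{n−1|n−1} + ω_n, x̂_{n|n−1} = x̂_{n−1|n−1} + R(θ̂_{n−1|n−1}) v_n, and p̂_{n|n−1} = p̂_{n−1|n−1}, the updated values being otherwise arbitrary. Define F_n = [[1, 0₁ₓ₂, 0₁ₓ₂],[R(θ̂_{n−1|n−1}) J v_n, I₂, 0₂ₓ₂],[0₂ₓ₁, 0₂ₓ₂, I₂]], H_n = M_n · [−J R(θ̂_{n|n−1})ᵀ (p̂_{n|n−1} − x̂_{n|n−1}) | −R(θ̂_{n|n−1})ᵀ | R(θ̂_{n|n−1})ᵀ] with M_n an arbitrary 2×2 matrix, δX₀ = (1, J x̂_{0|0}, J p̂_{0|0}) ∈ ℝ⁵, and δX_n = F_n ⋯ F₁ δX₀. Then for every n ≥ 1: H_n δX_n = M_n · J · R(θ̂_{n|n−1})ᵀ · [ −(p̂_{n|n−1} − p̂_{0|0}) +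 Σ_{i=1}^{n−1} (x̂_{i|i} − x̂_{i|i−1}) ]. In particular, the rotation shift is an unobservable shift of the EKF linearized model only if the bracketed quantity vanishes for all n. -/
open Matrix Real

lemma RJ_comm (θ : ℝ) (u : Fin 2 → ℝ) :
    (Rmat θ).mulVec (Jmat.mulVec u) = Jmat.mulVec ((Rmat θ).mulVec u) := by
  funext i; fin_cases i <;>
    simp [Rmat, Jmat, Matrix.mulVec, dotProduct, Fin.sum_univ_two] <;> ring

lemma RtJ_comm (θ : ℝ) (u : Fin 2 → ℝ) :
    (Rmat θ)ᵀ.mulVec (Jmat.mulVec u) = Jmat.mulVec ((Rmat θ)ᵀ.mulVec u) := by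
  funext i; fin_cases i <;>
    simp [Rmat, Jmat, Matrix.mulVec, dotProduct, Fin.sum_univ_two, Matrix.transpose_apply, Matrix.vecHead, Matrix.vecTail] <;> ring

lemma Fstep (θ : ℝ) (vv y q : Fin 2 → ℝ) :
    (Fmat θ vv).mulVec (vec5 1 y q) = vec5 1 (y + (Rmat θ).mulVec (Jmat.mulVec vv)) q := by
  funext i; fin_cases i <;>
    simp [Fmat, vec5, Rmat, Jmat, Matrix.mulVec, dotProduct, Matrix.mul_apply, Fin.sum_univ_five, Fin.sum_univ_two] <;> ring

lemma Hstep (θ : ℝ) (x p y q : Fin 2 → ℝ) :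
    (Hblock θ x p).mulVec (vec5 1 y q) =
      -(Jmat.mulVec ((Rmat θ)ᵀ.mulVec (p - x))) - (Rmat θ)ᵀ.mulVec y + (Rmat θ)ᵀ.mulVec q := by
  funext i; fin_cases i <;>
    simp [Hblock, vec5, Rmat, Jmat, Matrix.mulVec, dotProduct, Matrix.mul_apply, Fin.sum_univ_five, Fin.sum_univ_two, Matrix.transpose_apply, Matrix.vecHead, Matrix.vecTail] <;> ring

/-- For an EKF whose prediction step satisfies the standard SLAM relations
(`θ̂ₙ|ₙ₋₁ = θ̂ₙ₋₁|ₙ₋₁ + ωₙ`, `x̂ₙ|ₙ₋₁ = x̂ₙ₋₁|ₙ₋₁ + R(θ̂ₙ₋₁|ₙ₋₁)vₙ`, `p̂ₙ|ₙ₋₁ = p̂ₙ₋₁|ₙ₋₁`,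
updated values arbitrary), the rotation shift `δX₀ = (1, J x̂₀|₀, J p̂₀|₀)` propagated as
`δXₙ = Fₙ ⋯ F₁ δX₀` satisfies
`Hₙ δXₙ = Mₙ J R(θ̂ₙ|ₙ₋₁)ᵀ [ −(p̂ₙ|ₙ₋₁ − p̂₀|₀) + Σᵢ₌₁ⁿ⁻¹ (x̂ᵢ|ᵢ − x̂ᵢ|ᵢ₋₁) ]`.
Here `θu n, xu n, pu n` denote the updated estimates `·̂ₙ|ₙ` and `θp n, xp n, pp n` the
predicted ones `·̂ₙ|ₙ₋₁`. -/
theorem statement3 (ω : ℕ → ℝ) (v : ℕ → Fin 2 → ℝ)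
    (θu : ℕ → ℝ) (xu pu : ℕ → Fin 2 → ℝ)
    (θp : ℕ → ℝ) (xp pp : ℕ → Fin 2 → ℝ)
    (M : ℕ → Matrix (Fin 2) (Fin 2) ℝ)
    (hθ : ∀ n, θp (n + 1) = θu n + ω (n + 1))
    (hx : ∀ n, xp (n + 1) = xu n + (Rmat (θu n)).mulVec (v (n + 1)))
    (hp : ∀ n, pp (n + 1) = pu n) :
    ∀ n, 1 ≤ n →
      (M n * Hblock (θp n) (xp n) (pp n)).mulVec
          ((prodF (fun k => Fmat (θu (k - 1)) (v k)) n).mulVec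
            (vec5 1 (Jmat.mulVec (xu 0)) (Jmat.mulVec (pu 0)))) =
        (M n * Jmat * (Rmat (θp n))ᵀ).mulVec
          (-(pp n - pu 0) + ∑ i ∈ Finset.Ico 1 n, (xu i - xp i)) := by
  set F : ℕ → Matrix (Fin 5) (Fin 5) ℝ := fun k => Fmat (θu (k - 1)) (v k) with hF
  set w : ℕ → (Fin 2 → ℝ) := fun n => xu 0 + ∑ k ∈ Finset.range n, (xp (k + 1) - xu k) with hw
  have hprop : ∀ n, (prodF F n).mulVec (vec5 1 (Jmat.mulVec (xu 0)) (Jmat.mulVec (pu 0)))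
      = vec5 1 (Jmat.mulVec (w n)) (Jmat.mulVec (pu 0)) := by
    intro n
    induction n with
    | zero => simp [prodF, Matrix.one_mulVec, hw]
    | succ n ih =>
      have : prodF F (n + 1) = F (n + 1) * prodF F n := rfl
      rw [this, ← Matrix.mulVec_mulVec, ih]
      have hFn : F (n + 1) = Fmat (θu n) (v (n + 1)) := rfl
      rw [hFn, Fstep]
      have hxn : (Rmat (θu n)).mulVec (v (n + 1)) = xp (n + 1) - xu n := by
        rw [hx n]; abel
      have hwsucc : w (n + 1) = w n + (xp (n + 1) - xu n) := by
        simp [hw, Finset.sum_range_succ]; abel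
      rw [RJ_comm, hxn, hwsucc]
      simp only [hw, Matrix.mulVec_add]
  have htel : ∀ n, 1 ≤ n → w n = xp n - ∑ i ∈ Finset.Ico 1 n, (xu i - xp i) := by
    intro n hn
    induction n, hn using Nat.le_induction with
    | base => simp [hw, Finset.sum_range_one]
    | succ n hn ih =>
      have hwsucc : w (n + 1) = w n + (xp (n + 1) - xu n) := by
        simp [hw, Finset.sum_range_succ]; abel
      rw [hwsucc, ih, Finset.sum_Ico_succ_top hn]
      abel
  intro n hn
  rw [hprop, ← Matrix.mulVec_mulVec, Hstep, htel n hn, RtJ_comm, RtJ_comm,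
    Matrix.mulVec_mulVec, Matrix.mulVec_mulVec, Matrix.mulVec_mulVec,
    ← Matrix.mulVec_neg, ← Matrix.mulVec_sub, ← Matrix.mulVec_add,
    Matrix.mulVec_mulVec, ← Matrix.mul_assoc]
  congr 1
  abel
end

section
/- Fix an estimate (θ̂, x̂, p̂) ∈ ℝ × ℝ² × ℝ² and define the IEKF linearized error map ξ(θ, x, p) = (θ − θ̂, x − x̂ − (θ − θ̂) J x̂, p − p̂ − (θ − θ̂) J p̂) ∈ ℝ × ℝ² × ℝ². Then the map α ↦ ξ(θ̂ + α, R(α) x̂, R(α) p̂) is differentiable at α = 0 with derivative (1, 0, 0), and for any u ∈ ℝ², the map t ↦ ξ(θ̂, x̂ + t u, p̂ + t u) satisfies ξ(θ̂, x̂ + t u, p̂ + t u) = (0, t u, t u) exactly for all t. (The infinitesimal rotation and translation of the global frame are seen by the IEKF error as the constant directions (1,0,0) and (0,u,u).) -/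
open Matrix Real

/-- The IEKF linearized error variable associated with the estimate `(θ̂, x̂, p̂)`. -/
noncomputable def xiErr (θh : ℝ) (xh ph : Fin 2 → ℝ) (θ : ℝ) (x p : Fin 2 → ℝ) :
    ℝ × (Fin 2 → ℝ) × (Fin 2 → ℝ) :=
  (θ - θh, x - xh - (θ - θh) • Jmat.mulVec xh, p - ph - (θ - θh) • Jmat.mulVec ph)

lemma Rmat_mulVec (θ : ℝ) (v : Fin 2 → ℝ) :
    (Rmat θ).mulVec v = Real.cos θ • v + Real.sin θ • Jmat.mulVec v := by
  ext i
  fin_cases i <;> simp [Rmat, Jmat, Matrix.mulVec, dotProduct, Fin.sum_univ_two]; ring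

lemma Jmat_mulVec_Rmat_mulVec (θ : ℝ) (v : Fin 2 → ℝ) :
    Jmat.mulVec ((Rmat θ).mulVec v) = -Real.sin θ • v + Real.cos θ • Jmat.mulVec v := by
  ext i
  fin_cases i <;> simp [Rmat, Jmat, Matrix.mulVec, dotProduct, Fin.sum_univ_two] <;> ring

lemma Rmat_zero : Rmat 0 = 1 := by
  simp [Rmat, Matrix.one_fin_two]

lemma hasDerivAt_Rmat_mulVec (θ : ℝ) (v : Fin 2 → ℝ) :
    HasDerivAt (fun α : ℝ => (Rmat α).mulVec v) (Jmat.mulVec ((Rmat θ).mulVec v)) θ := by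
  rw [Jmat_mulVec_Rmat_mulVec]
  simp only [Rmat_mulVec]
  exact ((Real.hasDerivAt_cos θ).smul_const v).add ((Real.hasDerivAt_sin θ).smul_const _)

lemma hasDerivAt_Rmat_mulVec_sub_smul_Jmat_mulVec (v : Fin 2 → ℝ) :
    HasDerivAt (fun α : ℝ => (Rmat α).mulVec v - v - α • Jmat.mulVec v) 0 0 := by
  have h := (((hasDerivAt_Rmat_mulVec 0 v).sub_const v).sub
    ((hasDerivAt_id (0 : ℝ)).smul_const (Jmat.mulVec v)))
  simp only [Rmat_zero, Matrix.one_mulVec, id, one_smul, sub_self] at h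
  exact h

/-- The IEKF error sees an infinitesimal rotation of the global frame as the
constant direction `(1,0,0)` (to first order at `α = 0`), and a translation by `t u` exactly as
`(0, t u, t u)`. -/
theorem statement4 (θh : ℝ) (xh ph : Fin 2 → ℝ) :
    HasDerivAt (fun α : ℝ =>
        xiErr θh xh ph (θh + α) ((Rmat α).mulVec xh) ((Rmat α).mulVec ph))
      ((1 : ℝ), (0 : Fin 2 → ℝ), (0 : Fin 2 → ℝ)) 0 ∧
    ∀ (u : Fin 2 → ℝ) (t : ℝ),
      xiErr θh xh ph θh (xh + t • u) (ph + t • u) = ((0 : ℝ), t • u, t • u) := by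
  refine ⟨?_, fun u t => by simp [xiErr]⟩
  simp only [xiErr, add_sub_cancel_left]
  exact (hasDerivAt_id 0).prodMk ((hasDerivAt_Rmat_mulVec_sub_smul_Jmat_mulVec xh).prodMk
    (hasDerivAt_Rmat_mulVec_sub_smul_Jmat_mulVec ph))
end

section
/- For any 2×2 real matrix M and any θ̂ ∈ ℝ, the IEKF observation matrix H = M · R(θ̂)ᵀ · [0₂ₓ₁ | −I₂ | I₂] ∈ ℝ^{2×5} satisfies H δX₀^R = 0, H δX₀^1 = 0, and H δX₀^2 = 0, where δX₀^R = (1, 0, 0, 0, 0), δX₀^1 = (0, 1, 0, 1, 0), δX₀^2 = (0, 0, 1, 0, 1). Consequently, since the IEKF state-propagation Jacobian is the identity I₅, for every linear combination δX₀ of δX₀^R, δX₀^1, δX₀^2 and every sequence of such matrices H_n (with arbitrary M_n and θ̂_n), one has H_n · (I₅ ⋯ I₅ · δX₀) = 0 for all n: these shifts are unobservable shifts of the IEKF linearized SLAM model regardless of the sequence of estimates. -/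
open Matrix Real

/-- The 2×5 block matrix `[0₂ₓ₁ | −I₂ | I₂]`. -/
def Bmat0 : Matrix (Fin 2) (Fin 5) ℝ := !![0, -1, 0, 1, 0; 0, 0, -1, 0, 1]

/-- Unobservable rotation shift `(1, 0, 0)`. -/
def dR : Fin 5 → ℝ := ![1, 0, 0, 0, 0]

/-- Unobservable translation shift `(0, e₁, e₁)`. -/
def d1 : Fin 5 → ℝ := ![0, 1, 0, 1, 0]

/-- Unobservable translation shift `(0, e₂, e₂)`. -/
def d2 : Fin 5 → ℝ := ![0, 0, 1, 0, 1]

/-- The IEKF observation matrix `H = M R(θ̂)ᵀ [0 | −I₂ | I₂]` annihilates the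
shifts `δX₀ᴿ, δX₀¹, δX₀²`; consequently, the IEKF propagation Jacobian being `I₅`, every
linear combination of these shifts is an unobservable shift of the IEKF linearized model,
whatever the sequence of estimates `θ̂ₙ` and output Jacobians `Mₙ`. -/
theorem statement5 :
    (∀ (M : Matrix (Fin 2) (Fin 2) ℝ) (θ : ℝ),
      (M * (Rmat θ)ᵀ * Bmat0).mulVec dR = 0 ∧
      (M * (Rmat θ)ᵀ * Bmat0).mulVec d1 = 0 ∧
      (M * (Rmat θ)ᵀ * Bmat0).mulVec d2 = 0) ∧
    (∀ (a b c : ℝ) (M : ℕ → Matrix (Fin 2) (Fin 2) ℝ) (θ : ℕ → ℝ) (n : ℕ),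
      (M n * (Rmat (θ n))ᵀ * Bmat0).mulVec
        ((prodF (fun _ => (1 : Matrix (Fin 5) (Fin 5) ℝ)) n).mulVec
          (a • dR + b • d1 + c • d2)) = 0) := by
  have hB : ∀ v : Fin 5 → ℝ, Bmat0.mulVec v = 0 →
      ∀ (M : Matrix (Fin 2) (Fin 2) ℝ) (θ : ℝ),
      (M * (Rmat θ)ᵀ * Bmat0).mulVec v = 0 := by
    intro v hv M θ
    rw [Matrix.mul_assoc, ← Matrix.mulVec_mulVec, ← Matrix.mulVec_mulVec, hv,
      Matrix.mulVec_zero, Matrix.mulVec_zero]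
  have hR : Bmat0.mulVec dR = 0 := by
    funext i; fin_cases i <;> simp [Bmat0, dR, Matrix.mulVec, dotProduct,
      Fin.sum_univ_five]
  have h1 : Bmat0.mulVec d1 = 0 := by
    funext i; fin_cases i <;> simp [Bmat0, d1, Matrix.mulVec, dotProduct,
      Fin.sum_univ_five]
  have h2 : Bmat0.mulVec d2 = 0 := by
    funext i; fin_cases i <;> simp [Bmat0, d2, Matrix.mulVec, dotProduct,
      Fin.sum_univ_five]
  have hP : ∀ n, prodF (fun _ => (1 : Matrix (Fin 5) (Fin 5) ℝ)) n = 1 := by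
    intro n; induction n with
    | zero => rfl
    | succ n ih => simp [prodF, ih]
  refine ⟨fun M θ => ⟨hB _ hR M θ, hB _ h1 M θ, hB _ h2 M θ⟩, ?_⟩
  intro a b c M θ n
  rw [hP n, Matrix.one_mulVec]
  apply hB
  simp [Matrix.mulVec_add, Matrix.mulVec_smul, hR, h1, h2]
end

section
/- Let P ∈ ℝ^{5×5} be symmetric positive definite, S ∈ ℝ^{5×5} symmetric positive semidefinite, N ∈ ℝ^{2×2} symmetric positive definite, M an arbitrary 2×2 matrix and θ̂ ∈ ℝ. Set H = M · R(θ̂)ᵀ · [0₂ₓ₁ | −I₂ | I₂] ∈ ℝ^{2×5}, P' = P + S (propagation step), and P⁺ = P' − P' Hᵀ (H P' Hᵀ + N)⁻¹ H P' (Kalman update step). Then P' and P⁺ are symmetric positive definite, and for every vector δ ∈ ℝ⁵ that is a linear combination of (1,0,0,0,0), (0,1,0,1,0) and (0,0,1,0,1), one has δᵀ (P⁺)⁻¹ δ ≤ δᵀ P⁻¹ δ: the Fisher information of the IEKF along the unobservable rotation and translation shifts never increases over one propagation–update cycle. -/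
open Matrix Real

/-- The Kalman covariance update `P' ↦ P' − P'Hᵀ(HP'Hᵀ + N)⁻¹HP'`. -/
noncomputable def kalmanUpdate (P' : Matrix (Fin 5) (Fin 5) ℝ)
    (H : Matrix (Fin 2) (Fin 5) ℝ) (N : Matrix (Fin 2) (Fin 2) ℝ) :
    Matrix (Fin 5) (Fin 5) ℝ :=
  P' - P' * Hᵀ * (H * P' * Hᵀ + N)⁻¹ * H * P'

/-!
The update is the covariance form of the information update: by the Woodbury identity,
`(P⁺)⁻¹ = P'⁻¹ + Hᵀ N⁻¹ H`. The shifts `δ` are killed by `[0 | −I₂ | I₂]`, hence by `H`, so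
`δᵀ (P⁺)⁻¹ δ = δᵀ P'⁻¹ δ`, and `P ≤ P' = P + S` in the Loewner order gives `P'⁻¹ ≤ P⁻¹`.
-/

section InverseAntitone

variable {n : Type*} [Fintype n] [DecidableEq n]

theorem Matrix.PosDef.dotProduct_inv_mulVec_le {A B : Matrix n n ℝ} (hA : A.PosDef)
    (hAB : (B - A).PosSemidef) (δ : n → ℝ) :
    δ ⬝ᵥ B⁻¹ *ᵥ δ ≤ δ ⬝ᵥ A⁻¹ *ᵥ δ := by
  have hB : B.PosDef := by simpa using hA.add_posSemidef hAB
  set y := B⁻¹ *ᵥ δ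
  set w := A⁻¹ *ᵥ δ
  have hy : B *ᵥ y = δ := by
    rw [mulVec_mulVec, mul_nonsing_inv _ hB.det_pos.ne'.isUnit, one_mulVec]
  have hw : A *ᵥ w = δ := by
    rw [mulVec_mulVec, mul_nonsing_inv _ hA.det_pos.ne'.isUnit, one_mulVec]
  have hAsymm : w ⬝ᵥ A *ᵥ y = y ⬝ᵥ A *ᵥ w := by
    rw [dotProduct_mulVec, ← mulVec_transpose, ← conjTranspose_eq_transpose_of_trivial,
      hA.isHermitian.eq, dotProduct_comm]
  -- `0 ≤ (y - w)ᵀ A (y - w) + yᵀ (B - A) y = δᵀ w - δᵀ y`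
  have h₁ : 0 ≤ (y - w) ⬝ᵥ A *ᵥ (y - w) := by
    simpa using hA.posSemidef.dotProduct_mulVec_nonneg (y - w)
  have h₂ : 0 ≤ y ⬝ᵥ (B - A) *ᵥ y := by simpa using hAB.dotProduct_mulVec_nonneg y
  simp only [mulVec_sub, dotProduct_sub, sub_dotProduct, sub_mulVec, hAsymm, hw, hy]
    at h₁ h₂
  rw [dotProduct_comm w δ] at h₁
  rw [dotProduct_comm δ y]
  linarith

end InverseAntitone

section InformationForm

variable {m n : Type*} [Fintype m] [Fintype n] [DecidableEq m] [DecidableEq n]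

theorem Matrix.PosDef.inv_add_transpose_mul_inv_mul {P : Matrix n n ℝ} {N : Matrix m m ℝ}
    (hP : P.PosDef) (hN : N.PosDef) (H : Matrix m n ℝ) :
    (P⁻¹ + Hᵀ * N⁻¹ * H)⁻¹ = P - P * Hᵀ * (H * P * Hᵀ + N)⁻¹ * H * P := by
  have hHPH : (H * P * Hᵀ).PosSemidef := by
    simpa using hP.posSemidef.mul_mul_conjTranspose_same H
  have hS : (H * P * Hᵀ + N).PosDef := PosDef.posSemidef_add hHPH hN
  have hPinv : P⁻¹⁻¹ = P := nonsing_inv_nonsing_inv _ hP.det_pos.ne'.isUnit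
  have hNinv : N⁻¹⁻¹ = N := nonsing_inv_nonsing_inv _ hN.det_pos.ne'.isUnit
  have hAC : IsUnit (N⁻¹⁻¹ + H * P⁻¹⁻¹ * Hᵀ) := by
    rw [hPinv, hNinv, add_comm]
    exact hS.isUnit
  rw [add_mul_mul_inv_eq_sub _ _ _ _ hP.inv.isUnit hN.inv.isUnit hAC, hPinv, hNinv, add_comm N]

theorem Matrix.PosDef.posDef_inv_add_transpose_mul_inv_mul {P : Matrix n n ℝ}
    {N : Matrix m m ℝ} (hP : P.PosDef) (hN : N.PosDef) (H : Matrix m n ℝ) :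
    (P⁻¹ + Hᵀ * N⁻¹ * H).PosDef := by
  have hHNH : (Hᵀ * N⁻¹ * H).PosSemidef := by
    simpa using hN.inv.posSemidef.mul_mul_conjTranspose_same Hᵀ
  exact hP.inv.add_posSemidef hHNH

end InformationForm

section KalmanUpdate

variable {P' : Matrix (Fin 5) (Fin 5) ℝ} {N : Matrix (Fin 2) (Fin 2) ℝ}

theorem Matrix.PosDef.kalmanUpdate (hP' : P'.PosDef) (hN : N.PosDef)
    (H : Matrix (Fin 2) (Fin 5) ℝ) : (kalmanUpdate P' H N).PosDef := by
  rw [_root_.kalmanUpdate, ← hP'.inv_add_transpose_mul_inv_mul hN H]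
  exact (hP'.posDef_inv_add_transpose_mul_inv_mul hN H).inv

theorem inv_kalmanUpdate (hP' : P'.PosDef) (hN : N.PosDef) (H : Matrix (Fin 2) (Fin 5) ℝ) :
    (kalmanUpdate P' H N)⁻¹ = P'⁻¹ + Hᵀ * N⁻¹ * H := by
  rw [_root_.kalmanUpdate, ← hP'.inv_add_transpose_mul_inv_mul hN H,
    nonsing_inv_nonsing_inv _ (hP'.posDef_inv_add_transpose_mul_inv_mul hN H).det_pos.ne'.isUnit]

theorem inv_kalmanUpdate_mulVec_of_mulVec_eq_zero (hP' : P'.PosDef) (hN : N.PosDef)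
    {H : Matrix (Fin 2) (Fin 5) ℝ} {δ : Fin 5 → ℝ} (hδ : H *ᵥ δ = 0) :
    (kalmanUpdate P' H N)⁻¹ *ᵥ δ = P'⁻¹ *ᵥ δ := by
  rw [inv_kalmanUpdate hP' hN, add_mulVec, ← mulVec_mulVec, hδ, mulVec_zero, add_zero]

end KalmanUpdate

theorem Bmat0_mulVec_unobservable (a b c : ℝ) : Bmat0 *ᵥ (a • dR + b • d1 + c • d2) = 0 := by
  ext i
  fin_cases i <;> simp [Bmat0, dR, d1, d2, mulVec, dotProduct, Fin.sum_univ_five]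

/-- One propagation–update cycle of the IEKF-SLAM (propagation `P' = P + S`,
update with `H = M R(θ̂)ᵀ [0 | −I₂ | I₂]` and measurement noise `N`) keeps the covariance
positive definite and never increases the information `δᵀ P⁻¹ δ` along any linear combination
`δ` of the unobservable shifts `(1,0,0,0,0)`, `(0,1,0,1,0)`, `(0,0,1,0,1)`. -/
theorem statement6 (P S : Matrix (Fin 5) (Fin 5) ℝ) (N M : Matrix (Fin 2) (Fin 2) ℝ) (θ : ℝ)
    (hP : P.PosDef) (hS : S.PosSemidef) (hN : N.PosDef) :
    (P + S).PosDef ∧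
    (kalmanUpdate (P + S) (M * (Rmat θ)ᵀ * Bmat0) N).PosDef ∧
    ∀ a b c : ℝ,
      (a • dR + b • d1 + c • d2) ⬝ᵥ
          (kalmanUpdate (P + S) (M * (Rmat θ)ᵀ * Bmat0) N)⁻¹.mulVec
            (a • dR + b • d1 + c • d2) ≤
        (a • dR + b • d1 + c • d2) ⬝ᵥ P⁻¹.mulVec (a • dR + b • d1 + c • d2) := by
  have hP' : (P + S).PosDef := hP.add_posSemidef hS
  have hHδ (a b c : ℝ) : (M * (Rmat θ)ᵀ * Bmat0) *ᵥ (a • dR + b • d1 + c • d2) = 0 := by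
    rw [← mulVec_mulVec, Bmat0_mulVec_unobservable, mulVec_zero]
  refine ⟨hP', hP'.kalmanUpdate hN _, fun a b c => ?_⟩
  rw [inv_kalmanUpdate_mulVec_of_mulVec_eq_zero hP' hN (hHδ a b c)]
  exact hP.dotProduct_inv_mulVec_le (by simpa using hS) _
end

section
/- Let (θ_n¹, x_n¹) and (θ_n², x_n²) both follow the noise-free 2D SLAM dynamics with the same inputs (ω_n, v_n), with fixed landmarks p¹ and p² respectively, and suppose that for some α ∈ ℝ and u ∈ ℝ² the initial conditions satisfy θ₀² = θ₀¹ + α, x₀² = R(α) x₀¹ + u, and p² = R(α) p¹ + u (a rotation and translation of the whole system). Then for every n ≥ 0: θ_n² = θ_n¹ + α, x_n² = R(α) x_n¹ + u, and R(θ_n²)ᵀ (p² − x_n²) = R(θ_n¹)ᵀ (p¹ − x_n¹). In particular, the relative landmark observations of the two trajectories coincide at all times, so rotations and translations of the global frame are unobservable transformations of the SLAM system. -/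
open Matrix Real

/-!
Since `R(θ + α) = R(α) R(θ)`, one odometry step commutes with the rigid motion
`(θ, x) ↦ (θ + α, R(α) x + u)`, so by induction the second trajectory is the moved first one at
all times. Relative observations are invariant because `R(α)` is orthogonal and the translation
cancels in `p - x`.
-/

lemma Rmat_add (a b : ℝ) : Rmat (a + b) = Rmat a * Rmat b := by
  simp only [Rmat, mul_fin_two, cos_add, sin_add]
  ext i j
  fin_cases i <;> fin_cases j <;> simp <;> ring

lemma Rmat_transpose (a : ℝ) : (Rmat a)ᵀ = Rmat (-a) := by
  ext i j
  fin_cases i <;> fin_cases j <;> simp [Rmat]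

lemma Rmat_transpose_mul_self (a : ℝ) : (Rmat a)ᵀ * Rmat a = 1 := by
  rw [Rmat_transpose, ← Rmat_add, neg_add_cancel, Rmat_zero]

lemma Rmat_transpose_mulVec_mulVec (a : ℝ) (w : Fin 2 → ℝ) : (Rmat a)ᵀ *ᵥ (Rmat a *ᵥ w) = w := by
  rw [mulVec_mulVec, Rmat_transpose_mul_self, one_mulVec]

lemma odometry_step_rigid_motion (α θ : ℝ) (x u v : Fin 2 → ℝ) :
    (Rmat α *ᵥ x + u) + Rmat (θ + α) *ᵥ v = Rmat α *ᵥ (x + Rmat θ *ᵥ v) + u := by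
  rw [add_comm θ, Rmat_add, ← mulVec_mulVec, mulVec_add]
  abel

lemma relative_observation_rigid_motion (α θ : ℝ) (p x u : Fin 2 → ℝ) :
    (Rmat (θ + α))ᵀ *ᵥ ((Rmat α *ᵥ p + u) - (Rmat α *ᵥ x + u)) = (Rmat θ)ᵀ *ᵥ (p - x) := by
  rw [add_sub_add_right_eq_sub, ← mulVec_sub, add_comm θ, Rmat_add, transpose_mul,
    ← mulVec_mulVec, Rmat_transpose_mulVec_mulVec]

/-- If two noise-free SLAM trajectories with the same inputs are related at
time `0` by a rotation `α` and a translation `u` of the global frame, then they are so related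
at all times, and their relative landmark observations coincide at all times. -/
theorem statement9 (ω : ℕ → ℝ) (v : ℕ → Fin 2 → ℝ)
    (θ1 θ2 : ℕ → ℝ) (x1 x2 : ℕ → Fin 2 → ℝ) (p1 p2 : Fin 2 → ℝ) (α : ℝ) (u : Fin 2 → ℝ)
    (h1θ : ∀ n, θ1 (n + 1) = θ1 n + ω (n + 1))
    (h1x : ∀ n, x1 (n + 1) = x1 n + (Rmat (θ1 n)).mulVec (v (n + 1)))
    (h2θ : ∀ n, θ2 (n + 1) = θ2 n + ω (n + 1))
    (h2x : ∀ n, x2 (n + 1) = x2 n + (Rmat (θ2 n)).mulVec (v (n + 1)))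
    (hθ0 : θ2 0 = θ1 0 + α)
    (hx0 : x2 0 = (Rmat α).mulVec (x1 0) + u)
    (hp : p2 = (Rmat α).mulVec p1 + u) :
    ∀ n, θ2 n = θ1 n + α ∧ x2 n = (Rmat α).mulVec (x1 n) + u ∧
      (Rmat (θ2 n))ᵀ.mulVec (p2 - x2 n) = (Rmat (θ1 n))ᵀ.mulVec (p1 - x1 n) := by
  have poses : ∀ n, θ2 n = θ1 n + α ∧ x2 n = Rmat α *ᵥ x1 n + u := by
    intro n
    induction n with
    | zero => exact ⟨hθ0, hx0⟩
    | succ n ih =>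
      obtain ⟨hθ, hx⟩ := ih
      refine ⟨by rw [h2θ, h1θ, hθ]; ring, ?_⟩
      rw [h2x, h1x, hθ, hx, odometry_step_rigid_motion]
  intro n
  obtain ⟨hθ, hx⟩ := poses n
  refine ⟨hθ, hx, ?_⟩
  rw [hθ, hx, hp, relative_observation_rigid_motion]
end

section
/- Let (θ_n, x_n) and (θ̂_n, x̂_n) both follow the noise-free 2D SLAM dynamics with the same inputs (ω_n, v_n), with fixed landmarks p and p̂ respectively. Then the right-invariant error (θ_n − θ̂_n, x_n − R(θ_n − θ̂_n) x̂_n, p − R(θ_n − θ̂_n) p̂) ∈ ℝ × ℝ² × ℝ² is constant in n, i.e., equal to its value at n = 0 for all n ≥ 0. -/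
open Matrix Real

/-- For two noise-free SLAM trajectories driven by the same inputs, the
right-invariant error `(θₙ − θ̂ₙ, xₙ − R(θₙ − θ̂ₙ) x̂ₙ, p − R(θₙ − θ̂ₙ) p̂)` is constant in `n`. -/
theorem statement10 (ω : ℕ → ℝ) (v : ℕ → Fin 2 → ℝ)
    (θ θh : ℕ → ℝ) (x xh : ℕ → Fin 2 → ℝ) (p ph : Fin 2 → ℝ)
    (hθ : ∀ n, θ (n + 1) = θ n + ω (n + 1))
    (hx : ∀ n, x (n + 1) = x n + (Rmat (θ n)).mulVec (v (n + 1)))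
    (hθh : ∀ n, θh (n + 1) = θh n + ω (n + 1))
    (hxh : ∀ n, xh (n + 1) = xh n + (Rmat (θh n)).mulVec (v (n + 1))) :
    ∀ n,
      (θ n - θh n, x n - (Rmat (θ n - θh n)).mulVec (xh n),
        p - (Rmat (θ n - θh n)).mulVec ph) =
      (θ 0 - θh 0, x 0 - (Rmat (θ 0 - θh 0)).mulVec (xh 0),
        p - (Rmat (θ 0 - θh 0)).mulVec ph) := by
  intro n
  induction n with
  | zero => rfl
  | succ n ih =>
    have h1 : θ n - θh n = θ 0 - θh 0 := congrArg Prod.fst ih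
    have h2 : x n - (Rmat (θ n - θh n)).mulVec (xh n) =
        x 0 - (Rmat (θ 0 - θh 0)).mulVec (xh 0) :=
      congrArg (Prod.fst ∘ Prod.snd) ih
    have hd : θ (n+1) - θh (n+1) = θ n - θh n := by rw [hθ, hθh]; ring
    have hR : Rmat (θ n - θh n) * Rmat (θh n) = Rmat (θ n) := by
      rw [← Rmat_add, sub_add_cancel]
    refine Prod.ext ?_ (Prod.ext ?_ ?_)
    · simp only [hd, h1]
    · show x (n+1) - (Rmat (θ (n+1) - θh (n+1))).mulVec (xh (n+1)) = _
      rw [hd, hx, hxh, Matrix.mulVec_add, Matrix.mulVec_mulVec, hR,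
        add_sub_add_right_eq_sub, h2]
    · simp only [hd, h1]
end

section
/- For any θ̂ ∈ ℝ and x̂, p̂ ∈ ℝ², the map α ↦ R(θ̂ + α)ᵀ · ((p̂ + α J p̂) − (x̂ + α J x̂)) from ℝ to ℝ² is differentiable at α = 0 with derivative equal to the zero vector. (This cancellation is why the first column of the IEKF observation Jacobian vanishes, making the heading direction unobservable in the IEKF linearized model.) -/
/-!
Write `R(θ) = cos θ • 1 + sin θ • J`. Then `R(θ)ᵀ = cos θ • 1 - sin θ • J` and, since `J² = -1`,
`d/dθ (R(θ)ᵀ w) = -J R(θ)ᵀ w = R(θ)ᵀ (-J w)`. By the product rule the derivative at `α = 0` of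
`R(θ̂ + α)ᵀ (w + α • u)` is `R(θ̂)ᵀ (u - J w)`, which vanishes for `w = p̂ - x̂`, `u = J w`.
-/

open Matrix Real

theorem Jmat_mulVec_Jmat_mulVec (w : Fin 2 → ℝ) : Jmat *ᵥ Jmat *ᵥ w = -w := by
  ext i
  fin_cases i <;> simp [Jmat, mulVec, dotProduct]

theorem transpose_Rmat_mulVec (θ : ℝ) (w : Fin 2 → ℝ) :
    (Rmat θ)ᵀ *ᵥ w = cos θ • w - sin θ • Jmat *ᵥ w := by
  ext i
  fin_cases i <;> simp [Rmat, Jmat, mulVec, dotProduct, mul_comm, sub_eq_add_neg, add_comm]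

theorem hasDerivAt_transpose_Rmat_mulVec (θ : ℝ) (w : Fin 2 → ℝ) :
    HasDerivAt (fun φ => (Rmat φ)ᵀ *ᵥ w) ((Rmat θ)ᵀ *ᵥ -(Jmat *ᵥ w)) θ := by
  simp_rw [transpose_Rmat_mulVec]
  refine (((hasDerivAt_cos θ).smul_const w).sub
    ((hasDerivAt_sin θ).smul_const (Jmat *ᵥ w))).congr_deriv ?_
  rw [mulVec_neg, Jmat_mulVec_Jmat_mulVec]
  module

theorem hasDerivAt_transpose_Rmat_add_mulVec_add_smul (θ : ℝ) (w u : Fin 2 → ℝ) :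
    HasDerivAt (fun α => (Rmat (θ + α))ᵀ *ᵥ (w + α • u)) ((Rmat θ)ᵀ *ᵥ (u - Jmat *ᵥ w)) 0 := by
  have hR (v : Fin 2 → ℝ) :
      HasDerivAt (fun α => (Rmat (θ + α))ᵀ *ᵥ v) ((Rmat θ)ᵀ *ᵥ -(Jmat *ᵥ v)) 0 :=
    HasDerivAt.comp_const_add θ 0 (by rw [add_zero]; exact hasDerivAt_transpose_Rmat_mulVec θ v)
  simp_rw [mulVec_add, mulVec_smul]
  refine ((hR w).add ((hasDerivAt_id (0 : ℝ)).smul (hR u))).congr_deriv ?_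
  rw [id, zero_smul, one_smul, zero_add, add_zero, ← mulVec_add, sub_eq_neg_add]

/-- The map
`α ↦ R(θ̂ + α)ᵀ ((p̂ + α J p̂) − (x̂ + α J x̂))` has zero derivative at `α = 0`. -/
theorem statement11 (θh : ℝ) (xh ph : Fin 2 → ℝ) :
    HasDerivAt (fun α : ℝ =>
        (Rmat (θh + α))ᵀ.mulVec ((ph + α • Jmat.mulVec ph) - (xh + α • Jmat.mulVec xh)))
      (0 : Fin 2 → ℝ) 0 := by
  have h := hasDerivAt_transpose_Rmat_add_mulVec_add_smul θh (ph - xh) (Jmat *ᵥ (ph - xh))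
  rw [sub_self, mulVec_zero] at h
  convert h using 2 with α
  congr 1
  rw [mulVec_sub, smul_sub]
  abel
end

section
/- For every ω ∈ ℝ³ with ω ≠ 0 and every u ∈ ℝ³, let S be the 4×4 real matrix whose upper-left 3×3 block is the skew-symmetric matrix (ω)ₓ (defined by (ω)ₓ v = ω × v for all v ∈ ℝ³), whose fourth column has top 3×1 block u, and whose last row is zero. Then the matrix exponential of S equals I₄ + S + ((1 − cos ‖ω‖)/‖ω‖²) S² + ((‖ω‖ − sin ‖ω‖)/‖ω‖³) S³, where ‖ω‖ is the Euclidean norm of ω. (Closed form of the Lie group exponential of SE(3), used by the 3D IEKF-SLAM.) -/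
open Matrix Real

/-- The skew-symmetric cross-product matrix `(ω)ₓ` of `ω ∈ ℝ³`, characterized by
`(ω)ₓ v = ω × v` for all `v`. -/
def skew (ω : Fin 3 → ℝ) : Matrix (Fin 3) (Fin 3) ℝ :=
  !![0, -ω 2, ω 1;
     ω 2, 0, -ω 0;
     -ω 1, ω 0, 0]

/-- The 4×4 matrix of `se(3)` with rotational part `(ω)ₓ` and translational part `u`. -/
def se3mat (ω u : Fin 3 → ℝ) : Matrix (Fin 4) (Fin 4) ℝ :=
  !![0, -ω 2, ω 1, u 0;
     ω 2, 0, -ω 0, u 1;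
     -ω 1, ω 0, 0, u 2;
     0, 0, 0, 0]

/-- The Euclidean norm of a vector of `ℝ³`. -/
noncomputable def enorm3 (ω : Fin 3 → ℝ) : ℝ := ‖(WithLp.equiv 2 (Fin 3 → ℝ)).symm ω‖

/-!
Write `θ = ‖ω‖` and `W = (ω)ₓ`. Since `W³ = -θ² W` and the last column of `S ^ (n + 1)` is
`Wⁿ u`, the matrix satisfies `S⁴ = -θ² S²`. Hence `S ^ (2k + 2) = (-θ²)ᵏ S²` and
`S ^ (2k + 3) = (-θ²)ᵏ S³`, and splitting the exponential series beyond its first two terms into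
even and odd indices leaves the tails `Σ (-θ²)ᵏ / (2k + 2)! = (1 - cos θ) / θ²` and
`Σ (-θ²)ᵏ / (2k + 3)! = (θ - sin θ) / θ³` of the cosine and sine series.
-/

open scoped Nat

theorem hasSum_one_sub_cos_div_sq {θ : ℝ} (hθ : θ ≠ 0) :
    HasSum (fun n : ℕ => (-θ ^ 2) ^ n / (2 * n + 2)!) ((1 - cos θ) / θ ^ 2) := by
  have h := ((hasSum_nat_add_iff' 1).2 (Real.hasSum_cos θ)).div_const (-θ ^ 2)
  have hterm (n : ℕ) : (-1) ^ (n + 1) * θ ^ (2 * (n + 1)) / (2 * (n + 1))! / -θ ^ 2 =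
      (-θ ^ 2) ^ n / (2 * n + 2)! := by
    rw [neg_pow (θ ^ 2), ← pow_mul, show 2 * (n + 1) = 2 * n + 2 by ring]
    field_simp
    ring
  have hsum : (cos θ - ∑ n ∈ Finset.range 1, (-1) ^ n * θ ^ (2 * n) / (2 * n)!) / -θ ^ 2 =
      (1 - cos θ) / θ ^ 2 := by
    simp only [Finset.sum_range_one]
    field_simp
    simp
  simpa only [hterm, hsum] using h

theorem hasSum_sub_sin_div_cube {θ : ℝ} (hθ : θ ≠ 0) :
    HasSum (fun n : ℕ => (-θ ^ 2) ^ n / (2 * n + 3)!) ((θ - sin θ) / θ ^ 3) := by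
  have h := ((hasSum_nat_add_iff' 1).2 (Real.hasSum_sin θ)).div_const (-θ ^ 3)
  have hterm (n : ℕ) : (-1) ^ (n + 1) * θ ^ (2 * (n + 1) + 1) / (2 * (n + 1) + 1)! / -θ ^ 3 =
      (-θ ^ 2) ^ n / (2 * n + 3)! := by
    rw [neg_pow (θ ^ 2), ← pow_mul, show 2 * (n + 1) + 1 = 2 * n + 3 by ring]
    field_simp
    ring
  have hsum : (sin θ - ∑ n ∈ Finset.range 1, (-1) ^ n * θ ^ (2 * n + 1) / (2 * n + 1)!) / -θ ^ 3 =
      (θ - sin θ) / θ ^ 3 := by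
    simp only [Finset.sum_range_one]
    field_simp
    simp
  simpa only [hterm, hsum] using h

section

variable {A : Type*} [Ring A] [Algebra ℝ A]

theorem pow_eq_smul_of_pow_four_eq_smul {S : A} {c : ℝ} (hS : S ^ 4 = c • S ^ 2) (k n : ℕ) :
    S ^ (2 * k + n + 2) = c ^ k • S ^ (n + 2) := by
  have hshift (m : ℕ) : S ^ (m + 4) = c • S ^ (m + 2) := by
    rw [pow_add, hS, mul_smul_comm, ← pow_add]
  induction k with
  | zero => simp
  | succ k ih =>
    rw [show 2 * (k + 1) + n + 2 = 2 * k + n + 2 + 2 by ring, pow_add, ih, smul_mul_assoc,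
      ← pow_add, hshift, smul_smul, ← pow_succ]

theorem exp_eq_of_pow_four_eq_neg_sq_smul [TopologicalSpace A] [IsTopologicalRing A]
    [ContinuousSMul ℝ A] [T2Space A] {S : A} {θ : ℝ} (hθ : θ ≠ 0)
    (hS : S ^ 4 = (-θ ^ 2) • S ^ 2) :
    NormedSpace.exp S =
      1 + S + ((1 - cos θ) / θ ^ 2) • S ^ 2 + ((θ - sin θ) / θ ^ 3) • S ^ 3 := by
  have heven : HasSum (fun k : ℕ => ((2 * k + 2)! : ℝ)⁻¹ • S ^ (2 * k + 2))
      (((1 - cos θ) / θ ^ 2) • S ^ 2) := by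
    refine ((hasSum_one_sub_cos_div_sq hθ).smul_const (S ^ 2)).congr_fun fun k => ?_
    rw [pow_eq_smul_of_pow_four_eq_smul hS k 0, smul_smul, zero_add, div_eq_inv_mul]
  have hodd : HasSum (fun k : ℕ => ((2 * k + 1 + 2)! : ℝ)⁻¹ • S ^ (2 * k + 1 + 2))
      (((θ - sin θ) / θ ^ 3) • S ^ 3) := by
    refine ((hasSum_sub_sin_div_cube hθ).smul_const (S ^ 3)).congr_fun fun k => ?_
    rw [pow_eq_smul_of_pow_four_eq_smul hS k 1, smul_smul, div_eq_inv_mul]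
  have htail := HasSum.even_add_odd (f := fun n => ((n + 2)! : ℝ)⁻¹ • S ^ (n + 2)) heven hodd
  rw [NormedSpace.exp_eq_tsum ℝ]
  refine ((hasSum_nat_add_iff' 2).1 ?_).tsum_eq
  have hhead : ∑ n ∈ Finset.range 2, (n ! : ℝ)⁻¹ • S ^ n = 1 + S := by
    simp [Finset.sum_range_succ]
  rwa [hhead, add_assoc (1 + S), add_sub_cancel_left]

end

theorem enorm3_sq (ω : Fin 3 → ℝ) : enorm3 ω ^ 2 = ω 0 ^ 2 + ω 1 ^ 2 + ω 2 ^ 2 := by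
  rw [enorm3, EuclideanSpace.norm_eq, sq_sqrt (by positivity)]
  simp [Fin.sum_univ_three, sq]

theorem enorm3_ne_zero {ω : Fin 3 → ℝ} (hω : ω ≠ 0) : enorm3 ω ≠ 0 := by
  simpa [enorm3] using hω

theorem se3mat_sq (ω u : Fin 3 → ℝ) :
    se3mat ω u ^ 2 =
      !![-ω 1 ^ 2 - ω 2 ^ 2, ω 0 * ω 1, ω 0 * ω 2, ω 1 * u 2 - ω 2 * u 1;
         ω 0 * ω 1, -ω 0 ^ 2 - ω 2 ^ 2, ω 1 * ω 2, ω 2 * u 0 - ω 0 * u 2;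
         ω 0 * ω 2, ω 1 * ω 2, -ω 0 ^ 2 - ω 1 ^ 2, ω 0 * u 1 - ω 1 * u 0;
         0, 0, 0, 0] := by
  ext i j
  fin_cases i <;> fin_cases j <;> simp [se3mat, sq, mul_apply, Fin.sum_univ_four] <;> ring

theorem se3mat_pow_four (ω u : Fin 3 → ℝ) :
    se3mat ω u ^ 4 = (-enorm3 ω ^ 2) • se3mat ω u ^ 2 := by
  rw [show se3mat ω u ^ 4 = se3mat ω u ^ 2 * se3mat ω u ^ 2 by rw [← pow_add], se3mat_sq,
    enorm3_sq]
  ext i j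
  fin_cases i <;> fin_cases j <;> simp [mul_apply, Fin.sum_univ_four] <;> ring

/-- Closed form of the Lie group exponential of `SE(3)`: for `ω ≠ 0`,
`exp S = I + S + ((1 − cos‖ω‖)/‖ω‖²) S² + ((‖ω‖ − sin‖ω‖)/‖ω‖³) S³`, where `S` is the 4×4
matrix with upper-left block `(ω)ₓ`, fourth column topped by `u`, and last row zero.
(The matrix `skew ω` satisfies `(skew ω).mulVec v = ω × v` for every `v`.) -/
theorem statement19 (ω u : Fin 3 → ℝ) (hω : ω ≠ 0) :
    NormedSpace.exp (se3mat ω u) =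
      1 + se3mat ω u + ((1 - Real.cos (enorm3 ω)) / (enorm3 ω) ^ 2) • (se3mat ω u) ^ 2 +
        ((enorm3 ω - Real.sin (enorm3 ω)) / (enorm3 ω) ^ 3) • (se3mat ω u) ^ 3 := by
  rw [exp_eq_of_pow_four_eq_neg_sq_smul (enorm3_ne_zero hω) (se3mat_pow_four ω u)]
end
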